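/- Let 𝔞 be a nonempty finite set and suppose all θ_{(a,m)} and φ_{(a,m),(b,m')} are real and nonnegative, and that there exist M₋ > 0 and ρ₋ > 0 with θ_{(a,i)} ≥ M₋/ρ₋^{i+1} for all (a,i) ∈ 𝔄 (strong positivity). Then the amplitudes F_{g;α_1,…,α_n} are real and, for all integers g ≥ 0, n ≥ 1 with 2g−2+n > 0 and α_i = (a_i,k_i) ∈ 𝔄, satisfy F_{g;α_1,…,α_n} ≥ δ_{a_1,…,a_n} · (2M₋)^{2g−2+n} · F^PI_{g;k_1,…,k_n}(ρ₋/3), where δ_{a_1,…,a_n} equals 1 if a_1 = ⋯ = a_n and 0 otherwise. -/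

import Mathlib

open scoped BigOperators

noncomputable section

/-- The data of a quantum Airy structure: tensors `A`, `B`, `C`, `D`.
`B α β γ` stands for `B_{α,β}^{γ}` and `C α β γ` for `C_{α}^{β,γ}`. -/
structure AiryTensors (𝕜 : Type*) [RCLike 𝕜] (ι : Type*) where
  A : ι → ι → ι → 𝕜
  B : ι → ι → ι → 𝕜
  C : ι → ι → ι → 𝕜
  D : ι → 𝕜

/-- The sublist of `l` formed by the entries whose index lies in `s`. -/
def selectIdx {ι : Type*} (l : List ι) (s : Finset (Fin l.length)) : List ι :=
  ((List.finRange l.length).filter (fun i => decide (i ∈ s))).map l.get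

/-- `F` is the family of amplitudes associated with the tensors `T`:
symmetric in its indices, vanishing when `k₁ + ⋯ + kₙ > 3g - 3 + n` (where `k = deg`),
with initial data `F_{0;α,β,γ} = A_{α,β,γ}`, `F_{1;α} = D_α`, the conventions
`F_{0;α} = F_{0;α,β} = 0`, and satisfying the topological recursion on `2g - 2 + n`. -/
structure IsAmplitudes {𝕜 : Type*} [RCLike 𝕜] {ι : Type*} (deg : ι → ℕ)
    (T : AiryTensors 𝕜 ι) (F : ℕ → List ι → 𝕜) : Prop where
  symm : ∀ g (l l' : List ι), l.Perm l' → F g l = F g l'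
  vanish : ∀ g (l : List ι), 1 ≤ l.length → 2 < 2 * g + l.length →
    3 * g + l.length < (l.map deg).sum + 3 → F g l = 0
  zero_one : ∀ α, F 0 [α] = 0
  zero_two : ∀ α β, F 0 [α, β] = 0
  base_A : ∀ α β γ, F 0 [α, β, γ] = T.A α β γ
  base_D : ∀ α, F 1 [α] = T.D α
  recur : ∀ g (α : ι) (l : List ι), 4 ≤ 2 * g + (l.length + 1) →
    F g (α :: l) =
      (∑ m : Fin l.length, ∑' μ : ι, T.B α (l.get m) μ * F g (μ :: l.eraseIdx m.1))
      + (1/2) * ∑' μ : ι, ∑' ν : ι, T.C α μ ν *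
          ((if g = 0 then 0 else F (g-1) (μ :: ν :: l))
           + ∑ g₁ ∈ Finset.range (g+1), ∑ s : Finset (Fin l.length),
               F g₁ (μ :: selectIdx l s) * F (g - g₁) (ν :: selectIdx l sᶜ))

/-- The Painlevé I quantum Airy structure with parameter `u`. -/
def PITensors (u : ℝ) : AiryTensors ℝ ℕ where
  A i j k := if i = 0 ∧ j = 0 ∧ k = 0 then 1 / (6 * u) else 0
  B i j k := if i + j ≤ k + 1 then
      (Nat.doubleFactorial (2*k+1) : ℝ) / (2 * (3*u) ^ (k + 2 - (i + j)) * (Nat.doubleFactorial (2*i+1) : ℝ) * (Nat.doubleFactorial (2*j-1) : ℝ))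
    else 0
  C i j k := if i ≤ j + k + 2 then
      ((Nat.doubleFactorial (2*j+1) : ℝ) * (Nat.doubleFactorial (2*k+1) : ℝ)) / (2 * (3*u) ^ (j + k + 3 - i) * (Nat.doubleFactorial (2*i+1) : ℝ))
    else 0
  D i := (if i = 0 then 1 / (16 * (3*u)^2) else 0) + (if i = 1 then 1 / (48 * (3*u)) else 0)

/-- The Airy quantum Airy structure. -/
def AiryT : AiryTensors ℝ ℕ where
  A i j k := if i = 0 ∧ j = 0 ∧ k = 0 then 1 else 0
  B i j k := if i + j = k + 1 then (Nat.doubleFactorial (2*k+1) : ℝ) / ((Nat.doubleFactorial (2*i+1) : ℝ) * (Nat.doubleFactorial (2*j-1) : ℝ)) else 0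
  C i j k := if i = j + k + 2 then ((Nat.doubleFactorial (2*j+1) : ℝ) * (Nat.doubleFactorial (2*k+1) : ℝ)) / (Nat.doubleFactorial (2*i+1) : ℝ) else 0
  D i := if i = 1 then 1 / 24 else 0

/-- The quantum Airy structure of a (local) spectral curve with ramification points `𝔞`,
built from the expansion coefficients `θ` (with `θ a m = 0` for `m < 0`) and `φ`. -/
def genTensors {𝕜 : Type*} [RCLike 𝕜] {𝔞 : Type*} [DecidableEq 𝔞]
    (θ : 𝔞 → ℤ → 𝕜) (φ : 𝔞 × ℕ → 𝔞 × ℕ → 𝕜) : AiryTensors 𝕜 (𝔞 × ℕ) where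
  A α β γ := if α.1 = β.1 ∧ β.1 = γ.1 ∧ α.2 = 0 ∧ β.2 = 0 ∧ γ.2 = 0 then θ α.1 0 else 0
  B α β γ :=
    (if α.1 = β.1 ∧ β.1 = γ.1 then
        θ α.1 ((γ.2 : ℤ) - α.2 - β.2 + 1) * (Nat.doubleFactorial (2*γ.2+1) : 𝕜)
          / ((Nat.doubleFactorial (2*α.2+1) : 𝕜) * (Nat.doubleFactorial (2*β.2-1) : 𝕜))
      else 0)
    + (if α.1 = β.1 ∧ α.2 = 0 ∧ β.2 = 0 then
        θ α.1 0 * φ (α.1, 0) γ * (Nat.doubleFactorial (2*γ.2-1) : 𝕜) else 0)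
  C α β γ :=
    (if α.1 = β.1 ∧ β.1 = γ.1 then
        θ α.1 ((β.2 : ℤ) + γ.2 - α.2 + 2) * ((Nat.doubleFactorial (2*β.2+1) : 𝕜) * (Nat.doubleFactorial (2*γ.2+1) : 𝕜))
          / (Nat.doubleFactorial (2*α.2+1) : 𝕜)
      else 0)
    + (if α.1 = β.1 then
        (∑ m ∈ Finset.range (β.2 + 2 - α.2), θ α.1 (m : ℤ) * φ (α.1, β.2 + 1 - α.2 - m) γ)
          * ((Nat.doubleFactorial (2*β.2+1) : 𝕜) * (Nat.doubleFactorial (2*γ.2-1) : 𝕜)) / (Nat.doubleFactorial (2*α.2+1) : 𝕜)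
      else 0)
    + (if α.1 = γ.1 then
        (∑ m ∈ Finset.range (γ.2 + 2 - α.2), θ α.1 (m : ℤ) * φ (α.1, γ.2 + 1 - α.2 - m) β)
          * ((Nat.doubleFactorial (2*β.2-1) : 𝕜) * (Nat.doubleFactorial (2*γ.2+1) : 𝕜)) / (Nat.doubleFactorial (2*α.2+1) : 𝕜)
      else 0)
    + (if α.2 = 0 then
        θ α.1 0 * φ (α.1, 0) β * φ (α.1, 0) γ * ((Nat.doubleFactorial (2*β.2-1) : 𝕜) * (Nat.doubleFactorial (2*γ.2-1) : 𝕜))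
      else 0)
  D α :=
    (if α.2 = 0 then θ α.1 0 * φ (α.1, 0) (α.1, 0) / 2 + θ α.1 1 / 8 else 0)
    + (if α.2 = 1 then θ α.1 0 / 24 else 0)

/-- The function `P` from the upper bound on Painlevé I amplitudes. -/
def Pfun (u : ℝ) : ℝ := if u < 2/5 then 2 / (5 * u^2) else 5 / (10 * u - 2)

/-!
Both families of amplitudes satisfy the same recursion. All tensors of the strongly positive
curve are nonnegative, hence so are its amplitudes, and restricting the sums over `𝔄` in its
recursion to a single ramification point `a` only decreases them. Scaling tensors by `c` scales
`F_{g;n}` by `c^{2g-2+n}`, and the Painlevé I tensors are those of a curve with one ramification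
point, `φ = 0` and `θ_m = 1/(2 (3u)^{m+1})`; so strong positivity says precisely that the Painlevé I
tensors at `u = ρ₋/3`, scaled by `2 M₋`, are dominated by the tensors of the curve restricted to
`{a} × ℕ`. Induction on `2g - 2 + n` then compares the two recursions term by term.
-/

section Lists

variable {ι κ : Type*}

theorem selectIdx_length (l : List ι) (s : Finset (Fin l.length)) :
    (selectIdx l s).length = s.card := by
  rw [selectIdx, List.length_map]
  change (Finset.univ.filter (· ∈ s)).card = s.card
  simp

theorem selectIdx_map (f : κ → ι) (l : List κ) (s : Finset (Fin l.length)) :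
    selectIdx (l.map f) (s.map (finCongr (l.length_map f).symm).toEmbedding)
      = (selectIdx l s).map f := by
  have hrange : List.finRange (l.map f).length
      = (List.finRange l.length).map (finCongr (l.length_map f).symm) := by
    apply List.ext_getElem <;> simp
  simp only [selectIdx, hrange, List.filter_map, List.map_map]
  congr 2 <;> funext i <;> simp

theorem sum_fin_length_map {M : Type*} [AddCommMonoid M] (f : κ → ι) (l : List κ)
    (G : ι → List ι → M) :
    ∑ m : Fin (l.map f).length, G ((l.map f).get m) ((l.map f).eraseIdx m)
      = ∑ m : Fin l.length, G (f (l.get m)) ((l.eraseIdx m).map f) := by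
  refine (Fintype.sum_equiv (finCongr (l.length_map f).symm) _ _ fun m => ?_).symm
  simp [List.eraseIdx_map]

theorem sum_finset_fin_length_map {M : Type*} [AddCommMonoid M] (f : κ → ι) (l : List κ)
    (G : List ι → List ι → M) :
    ∑ s : Finset (Fin (l.map f).length), G (selectIdx (l.map f) s) (selectIdx (l.map f) sᶜ)
      = ∑ s : Finset (Fin l.length), G ((selectIdx l s).map f) ((selectIdx l sᶜ).map f) := by
  refine (Fintype.sum_equiv (Equiv.finsetCongr (finCongr (l.length_map f).symm)) _ _
    fun s => ?_).symm
  have hcompl : (Equiv.finsetCongr (finCongr (l.length_map f).symm) s)ᶜ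
      = Equiv.finsetCongr (finCongr (l.length_map f).symm) sᶜ := by
    ext; simp [Finset.mem_map_equiv]
  rw [hcompl, Equiv.finsetCongr_apply, Equiv.finsetCongr_apply, selectIdx_map, selectIdx_map]

end Lists

/-- The factor of `C_{α}^{μ,ν}` in the recursion for `F_{g;α,l}`. -/
def recBracket {R : Type*} [Semiring R] {ι : Type*} (F : ℕ → List ι → R) (g : ℕ) (l : List ι)
    (μ ν : ι) : R :=
  (if g = 0 then 0 else F (g - 1) (μ :: ν :: l))
    + ∑ g₁ ∈ Finset.range (g + 1), ∑ s : Finset (Fin l.length),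
        F g₁ (μ :: selectIdx l s) * F (g - g₁) (ν :: selectIdx l sᶜ)

namespace IsAmplitudes

variable {𝕜 : Type*} [RCLike 𝕜] {ι : Type*} {deg : ι → ℕ} {T : AiryTensors 𝕜 ι}
  {F : ℕ → List ι → 𝕜}

theorem recur' (hF : IsAmplitudes deg T F) (g : ℕ) (α : ι) (l : List ι)
    (h : 4 ≤ 2 * g + (l.length + 1)) :
    F g (α :: l) =
      (∑ m : Fin l.length, ∑' μ : ι, T.B α (l.get m) μ * F g (μ :: l.eraseIdx m))
      + 1 / 2 * ∑' μ : ι, ∑' ν : ι, T.C α μ ν * recBracket F g l μ ν :=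
  hF.recur g α l h

theorem eq_zero_of_small (hF : IsAmplitudes deg T F) {g : ℕ} {l : List ι} (h1 : 1 ≤ l.length)
    (h2 : 2 * g + l.length ≤ 2) : F g l = 0 := by
  obtain rfl : g = 0 := by omega
  match l, h1, h2 with
  | [x], _, _ => exact hF.zero_one x
  | [x, y], _, _ => exact hF.zero_two x y

theorem eq_zero_of_mem (hF : IsAmplitudes deg T F) {g : ℕ} {l : List ι} {x : ι} (hx : x ∈ l)
    (hdeg : 3 * g + l.length < deg x + 3) : F g l = 0 := by
  have hl : 1 ≤ l.length := List.length_pos_of_mem hx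
  by_cases hsmall : 2 * g + l.length ≤ 2
  · exact hF.eq_zero_of_small hl hsmall
  · refine hF.vanish g l hl (by omega) (hdeg.trans_le ?_)
    simp only [Nat.add_le_add_iff_right]
    exact List.le_sum_of_mem (List.mem_map_of_mem (f := deg) hx)

theorem recBracket_eq_zero (hF : IsAmplitudes deg T F) {g : ℕ} {l : List ι} {μ ν : ι}
    (hdeg : 3 * g + l.length + 2 ≤ deg μ ∨ 3 * g + l.length + 2 ≤ deg ν) :
    recBracket F g l μ ν = 0 := by
  have hprod : ∀ g₁ ∈ Finset.range (g + 1), ∀ s : Finset (Fin l.length),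
      F g₁ (μ :: selectIdx l s) * F (g - g₁) (ν :: selectIdx l sᶜ) = 0 := by
    intro g₁ hg₁ s
    have hcard := (Finset.card_add_card_compl s).trans (Fintype.card_fin _)
    rw [Finset.mem_range] at hg₁
    rcases hdeg with hμ | hν
    · exact mul_eq_zero_of_left
        (hF.eq_zero_of_mem List.mem_cons_self (by simp [selectIdx_length]; omega)) _
    · exact mul_eq_zero_of_right _
        (hF.eq_zero_of_mem List.mem_cons_self (by simp [selectIdx_length]; omega))
  have hprev : (if g = 0 then 0 else F (g - 1) (μ :: ν :: l)) = 0 := by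
    split_ifs
    · rfl
    rcases hdeg with hμ | hν
    · exact hF.eq_zero_of_mem List.mem_cons_self (by simp; omega)
    · exact hF.eq_zero_of_mem (List.mem_cons_of_mem _ List.mem_cons_self) (by simp; omega)
  simp only [recBracket, hprev, zero_add]
  exact Finset.sum_eq_zero fun g₁ hg₁ => Finset.sum_eq_zero fun s _ => hprod g₁ hg₁ s

end IsAmplitudes

namespace AiryTensors

variable {𝕜 : Type*} [RCLike 𝕜] {ι κ : Type*}

instance : SMul 𝕜 (AiryTensors 𝕜 ι) where
  smul c T := ⟨fun α β γ => c * T.A α β γ, fun α β γ => c * T.B α β γ,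
    fun α β γ => c * T.C α β γ, fun α => c * T.D α⟩

def comap (e : κ → ι) (T : AiryTensors 𝕜 ι) : AiryTensors 𝕜 κ :=
  ⟨fun i j k => T.A (e i) (e j) (e k), fun i j k => T.B (e i) (e j) (e k),
    fun i j k => T.C (e i) (e j) (e k), fun i => T.D (e i)⟩

structure Nonneg (T : AiryTensors ℝ ι) : Prop where
  A : ∀ α β γ, 0 ≤ T.A α β γ
  B : ∀ α β γ, 0 ≤ T.B α β γ
  C : ∀ α β γ, 0 ≤ T.C α β γ
  D : ∀ α, 0 ≤ T.D α

structure Le (T T' : AiryTensors ℝ ι) : Prop where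
  A : ∀ α β γ, T.A α β γ ≤ T'.A α β γ
  B : ∀ α β γ, T.B α β γ ≤ T'.B α β γ
  C : ∀ α β γ, T.C α β γ ≤ T'.C α β γ
  D : ∀ α, T.D α ≤ T'.D α

theorem Nonneg.smul {c : ℝ} (hc : 0 ≤ c) {T : AiryTensors ℝ ι} (hT : T.Nonneg) :
    (c • T).Nonneg :=
  ⟨fun α β γ => mul_nonneg hc (hT.A α β γ), fun α β γ => mul_nonneg hc (hT.B α β γ),
    fun α β γ => mul_nonneg hc (hT.C α β γ), fun α => mul_nonneg hc (hT.D α)⟩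

end AiryTensors

section Rescale

variable {𝕜 : Type*} [RCLike 𝕜] {ι : Type*}

def rescaleAmp (c : 𝕜) (F : ℕ → List ι → 𝕜) (g : ℕ) (l : List ι) : 𝕜 :=
  c ^ (2 * (g : ℤ) + l.length - 2) * F g l

theorem recBracket_rescaleAmp {c : 𝕜} (hc : c ≠ 0) (F : ℕ → List ι → 𝕜) (g : ℕ) (l : List ι)
    (μ ν : ι) :
    recBracket (rescaleAmp c F) g l μ ν
      = c ^ (2 * (g : ℤ) + l.length - 2) * recBracket F g l μ ν := by
  simp only [recBracket, rescaleAmp, mul_add, Finset.mul_sum]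
  congr 1
  · split_ifs with hg
    · simp
    · simp only [List.length_cons]
      congr 2
      push_cast [Nat.one_le_iff_ne_zero.mpr hg]
      ring
  · refine Finset.sum_congr rfl fun g₁ hg₁ => Finset.sum_congr rfl fun s _ => ?_
    have hg₁ : g₁ ≤ g := Nat.lt_succ_iff.mp (Finset.mem_range.mp hg₁)
    have hcard := (Finset.card_add_card_compl s).trans (Fintype.card_fin _)
    rw [mul_mul_mul_comm, ← zpow_add₀ hc]
    congr 2
    simp only [List.length_cons, selectIdx_length]
    omega

variable {deg : ι → ℕ} {T : AiryTensors 𝕜 ι} {F : ℕ → List ι → 𝕜}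

theorem IsAmplitudes.smul {c : 𝕜} (hc : c ≠ 0) (hF : IsAmplitudes deg T F) :
    IsAmplitudes deg (c • T) (rescaleAmp c F) where
  symm g l l' h := by simp only [rescaleAmp, h.length_eq, hF.symm g l l' h]
  vanish g l h1 h2 h3 := by simp only [rescaleAmp, hF.vanish g l h1 h2 h3, mul_zero]
  zero_one α := by simp [rescaleAmp, hF.zero_one]
  zero_two α β := by simp [rescaleAmp, hF.zero_two]
  base_A α β γ := by
    show c ^ _ * F 0 [α, β, γ] = c * T.A α β γ
    norm_num [hF.base_A]
  base_D α := by
    show c ^ _ * F 1 [α] = c * T.D α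
    norm_num [hF.base_D]
  recur g α l h := by
    show rescaleAmp c F g (α :: l)
      = (∑ m : Fin l.length, ∑' μ, c * T.B α (l.get m) μ
          * rescaleAmp c F g (μ :: l.eraseIdx m))
        + 1 / 2 * ∑' μ, ∑' ν, c * T.C α μ ν * recBracket (rescaleAmp c F) g l μ ν
    set e : ℤ := 2 * (g : ℤ) + l.length - 2
    have hpow : c ^ (2 * (g : ℤ) + (α :: l).length - 2) = c * c ^ e := by
      rw [← zpow_one_add₀ hc]
      simp only [List.length_cons, e]
      push_cast
      ring_nf
    have hB : ∀ (m : Fin l.length) μ, c * T.B α (l.get m) μ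
        * rescaleAmp c F g (μ :: l.eraseIdx m)
        = c * c ^ e * (T.B α (l.get m) μ * F g (μ :: l.eraseIdx m)) := by
      intro m μ
      rw [rescaleAmp, List.length_cons, List.length_eraseIdx_add_one m.2]
      ring
    have hC : ∀ μ ν, c * T.C α μ ν * recBracket (rescaleAmp c F) g l μ ν
        = c * c ^ e * (T.C α μ ν * recBracket F g l μ ν) := by
      intro μ ν
      rw [recBracket_rescaleAmp hc]
      ring
    simp only [hB, hC, tsum_mul_left, ← Finset.mul_sum]
    rw [rescaleAmp, hpow, hF.recur' g α l h]
    ring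

end Rescale

section Sums

variable {ι κ : Type*} {deg : ι → ℕ} {e : κ → ι}

theorem tsum_le_tsum_of_le_comp (hdeg : ∀ N, {x | deg x < N}.Finite) (he : e.Injective)
    {p : κ → ℝ} {f : ι → ℝ} (hp : ∀ k, 0 ≤ p k) (hf : ∀ x, 0 ≤ f x)
    (hpf : ∀ k, p k ≤ f (e k)) (N : ℕ) (hN : ∀ x, N ≤ deg x → f x = 0) :
    ∑' k, p k ≤ ∑' x, f x := by
  have hfs : Summable f := summable_of_hasFiniteSupport <| (hdeg N).subset fun x hx => by
    by_contra hlt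
    exact hx (hN x (not_lt.mp hlt))
  exact Summable.tsum_le_tsum_of_inj e he (fun x _ => hf x) hpf
    ((hfs.comp_injective he).of_nonneg_of_le hp hpf) hfs

theorem tsum_tsum_le_tsum_tsum_of_le_comp (hdeg : ∀ N, {x | deg x < N}.Finite)
    (he : e.Injective) {p : κ → κ → ℝ} {f : ι → ι → ℝ} (hp : ∀ j k, 0 ≤ p j k)
    (hf : ∀ x y, 0 ≤ f x y) (hpf : ∀ j k, p j k ≤ f (e j) (e k)) (N : ℕ)
    (hN : ∀ x y, N ≤ deg x ∨ N ≤ deg y → f x y = 0) :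
    ∑' j, ∑' k, p j k ≤ ∑' x, ∑' y, f x y :=
  tsum_le_tsum_of_le_comp hdeg he (fun j => tsum_nonneg (hp j)) (fun x => tsum_nonneg (hf x))
    (fun j => tsum_le_tsum_of_le_comp hdeg he (hp j) (hf _) (hpf j) N fun y hy =>
      hN _ y (.inr hy))
    N fun x hx => by simp [hN x _ (.inl hx)]

end Sums

section Recursion

variable {ι κ : Type*}

theorem induction_on_two_mul_add_length {P : ℕ → List ι → Prop}
    (small : ∀ g l, 1 ≤ l.length → 2 * g + l.length ≤ 2 → P g l)
    (base_A : ∀ α β γ, P 0 [α, β, γ]) (base_D : ∀ α, P 1 [α])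
    (step : ∀ g α l, 4 ≤ 2 * g + (l.length + 1) →
      (∀ g' l', 1 ≤ l'.length → 2 * g' + l'.length < 2 * g + (l.length + 1) → P g' l') →
      P g (α :: l)) :
    ∀ g l, 1 ≤ l.length → P g l := by
  intro g l hl
  induction hN : 2 * g + l.length using Nat.strong_induction_on generalizing g l with
  | _ N IH =>
  obtain ⟨α, l, rfl⟩ := List.exists_cons_of_length_pos hl
  rcases Nat.lt_or_ge (2 * g + (l.length + 1)) 4 with hlt | hge
  · by_cases h2 : 2 * g + (l.length + 1) ≤ 2
    · exact small g _ hl h2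
    obtain ⟨rfl, hl'⟩ | ⟨rfl, hl'⟩ : g = 0 ∧ l.length = 2 ∨ g = 1 ∧ l.length = 0 := by omega
    · obtain ⟨β, γ, rfl⟩ := List.length_eq_two.mp hl'
      exact base_A α β γ
    · rw [List.length_eq_zero_iff.mp hl']
      exact base_D α
  · exact step g α l hge fun g' l' hl' hlt => IH _ (hN ▸ hlt) g' l' hl' rfl

theorem recBracket_mono {F₁ F₂ : ℕ → List ι → ℝ} {g : ℕ} {l : List ι} (μ ν : ι)
    (hz₁ : ∀ x, F₁ 0 [x] = 0) (hz₂ : ∀ x, F₂ 0 [x] = 0)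
    (h₁ : ∀ g' l', 1 ≤ l'.length → 2 * g' + l'.length < 2 * g + (l.length + 1) →
      0 ≤ F₁ g' l')
    (hle : ∀ g' l', 1 ≤ l'.length → 2 * g' + l'.length < 2 * g + (l.length + 1) →
      F₁ g' l' ≤ F₂ g' l') :
    recBracket F₁ g l μ ν ≤ recBracket F₂ g l μ ν := by
  unfold recBracket
  apply add_le_add
  · split_ifs with hg
    · rfl
    · exact hle _ _ (by simp) (by simp; omega)
  refine Finset.sum_le_sum fun g₁ hg₁ => Finset.sum_le_sum fun s _ => ?_
  have hg₁ : g₁ ≤ g := Nat.lt_succ_iff.mp (Finset.mem_range.mp hg₁)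
  have hcard := (Finset.card_add_card_compl s).trans (Fintype.card_fin _)
  have hlen := selectIdx_length l s
  have hlenc := selectIdx_length l sᶜ
  -- A factor of full size is `F_{g;μ,l}` or `F_{g;ν,l}`, and then the other one is `F_{0;ν} = 0`
  -- or `F_{0;μ} = 0`.
  by_cases hlt₁ : 2 * g₁ + (s.card + 1) < 2 * g + (l.length + 1)
  · by_cases hlt₂ : 2 * (g - g₁) + (sᶜ.card + 1) < 2 * g + (l.length + 1)
    · exact mul_le_mul (hle _ _ (by simp) (by simpa [hlen] using hlt₁))
        (hle _ _ (by simp) (by simpa [hlenc] using hlt₂)) (h₁ _ _ (by simp) (by simpa [hlenc]))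
        ((h₁ _ _ (by simp) (by simpa [hlen])).trans (hle _ _ (by simp) (by simpa [hlen])))
    obtain ⟨rfl, hs⟩ : g₁ = 0 ∧ selectIdx l s = [] :=
      ⟨by omega, List.length_eq_zero_iff.mp (by omega)⟩
    simp [hs, hz₁, hz₂]
  · obtain ⟨hg, hs⟩ : g - g₁ = 0 ∧ selectIdx l sᶜ = [] :=
      ⟨by omega, List.length_eq_zero_iff.mp (by omega)⟩
    simp [hg, hs, hz₁, hz₂]

theorem recBracket_nonneg {F : ℕ → List ι → ℝ} {g : ℕ} {l : List ι} (μ ν : ι)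
    (hz : ∀ x, F 0 [x] = 0)
    (h : ∀ g' l', 1 ≤ l'.length → 2 * g' + l'.length < 2 * g + (l.length + 1) → 0 ≤ F g' l') :
    0 ≤ recBracket F g l μ ν := by
  simpa [recBracket] using recBracket_mono (F₁ := fun _ _ => 0) μ ν (fun _ => rfl) hz
    (fun _ _ _ _ => le_rfl) h

theorem recBracket_map {R : Type*} [Semiring R] (F : ℕ → List ι → R) (e : κ → ι) (g : ℕ)
    (l : List κ) (μ ν : κ) :
    recBracket F g (l.map e) (e μ) (e ν) = recBracket (fun g l => F g (l.map e)) g l μ ν := by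
  unfold recBracket
  congr 1
  exact Finset.sum_congr rfl fun g₁ _ =>
    sum_finset_fin_length_map e l fun a b => F g₁ (e μ :: a) * F (g - g₁) (e ν :: b)

end Recursion

namespace IsAmplitudes

variable {ι κ : Type*} {deg : ι → ℕ} {T : AiryTensors ℝ ι} {F : ℕ → List ι → ℝ}

theorem nonneg (hF : IsAmplitudes deg T F) (hT : T.Nonneg) :
    ∀ g l, 1 ≤ l.length → 0 ≤ F g l := by
  refine induction_on_two_mul_add_length (fun g l hl h2 => (hF.eq_zero_of_small hl h2).ge)
    (fun α β γ => hF.base_A α β γ ▸ hT.A α β γ) (fun α => hF.base_D α ▸ hT.D α)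
    fun g α l h IH => ?_
  rw [hF.recur' g α l h]
  refine add_nonneg (Finset.sum_nonneg fun m _ => tsum_nonneg fun μ =>
    mul_nonneg (hT.B _ _ _) (IH _ _ (by simp) ?_))
    (mul_nonneg (by norm_num) (tsum_nonneg fun μ => tsum_nonneg fun ν =>
      mul_nonneg (hT.C _ _ _) (recBracket_nonneg μ ν hF.zero_one IH)))
  simp [List.length_eraseIdx_add_one m.2]

theorem le_map {deg' : κ → ℕ} {T' : AiryTensors ℝ κ} {F' : ℕ → List κ → ℝ}
    (hF' : IsAmplitudes deg' T' F') (hF : IsAmplitudes deg T F)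
    (hdeg : ∀ N, {x | deg x < N}.Finite) {e : κ → ι} (he : e.Injective)
    (hT' : T'.Nonneg) (hT : T.Nonneg) (hle : T'.Le (T.comap e)) :
    ∀ g l, 1 ≤ l.length → F' g l ≤ F g (l.map e) := by
  have hF'0 := hF'.nonneg hT'
  have hF0 := hF.nonneg hT
  refine induction_on_two_mul_add_length
    (fun g l hl h2 => by rw [hF'.eq_zero_of_small hl h2, hF.eq_zero_of_small (by simpa) (by simpa)])
    (fun α β γ => by simpa [hF'.base_A, hF.base_A, AiryTensors.comap] using hle.A α β γ)
    (fun α => by simpa [hF'.base_D, hF.base_D, AiryTensors.comap] using hle.D α)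
    fun g α l h IH => ?_
  rw [List.map_cons, hF'.recur' g α l h, hF.recur' g (e α) (l.map e) (by simpa using h),
    sum_fin_length_map e l fun a b => ∑' μ, T.B (e α) a μ * F g (μ :: b)]
  apply add_le_add
  · refine Finset.sum_le_sum fun m _ => tsum_le_tsum_of_le_comp hdeg he
      (fun k => mul_nonneg (hT'.B _ _ _) (hF'0 _ _ (by simp)))
      (fun x => mul_nonneg (hT.B _ _ _) (hF0 _ _ (by simp)))
      (fun k => mul_le_mul (hle.B _ _ _)
        (IH _ _ (by simp) (by simp [List.length_eraseIdx_add_one m.2]))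
        (hF'0 _ _ (by simp)) (hT.B _ _ _))
      (3 * g + l.length + 2) fun x hx => ?_
    rw [hF.eq_zero_of_mem List.mem_cons_self, mul_zero]
    simp [List.length_eraseIdx_add_one m.2]
    omega
  · have hbr' : ∀ j k, 0 ≤ recBracket F' g l j k := fun j k =>
      recBracket_nonneg j k hF'.zero_one fun g' l' hl' _ => hF'0 g' l' hl'
    have hbr : ∀ μ ν, 0 ≤ recBracket F g (l.map e) μ ν := fun μ ν =>
      recBracket_nonneg μ ν hF.zero_one fun g' l' hl' _ => hF0 g' l' hl'
    have hbr_le : ∀ j k, recBracket F' g l j k ≤ recBracket F g (l.map e) (e j) (e k) :=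
      fun j k => recBracket_map F e g l j k ▸ recBracket_mono j k hF'.zero_one
        (fun x => hF.zero_one (e x)) (fun g' l' hl' _ => hF'0 g' l' hl') IH
    have hbr_zero : ∀ μ ν, 3 * g + l.length + 2 ≤ deg μ ∨ 3 * g + l.length + 2 ≤ deg ν →
        recBracket F g (l.map e) μ ν = 0 := fun μ ν h =>
      hF.recBracket_eq_zero (by simpa using h)
    refine mul_le_mul_of_nonneg_left (tsum_tsum_le_tsum_tsum_of_le_comp hdeg he
      (fun j k => mul_nonneg (hT'.C _ _ _) (hbr' j k))
      (fun μ ν => mul_nonneg (hT.C _ _ _) (hbr μ ν))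
      (fun j k => mul_le_mul (hle.C _ _ _) (hbr_le j k) (hbr' j k) (hT.C _ _ _))
      (3 * g + l.length + 2) fun μ ν h => by rw [hbr_zero μ ν h, mul_zero]) (by norm_num)

end IsAmplitudes

theorem finite_setOf_snd_lt {𝔞 : Type*} [Finite 𝔞] (N : ℕ) :
    {x : 𝔞 × ℕ | x.2 < N}.Finite :=
  (Set.finite_univ.prod (Set.finite_Iio N)).subset fun x hx => by simpa using hx

theorem PITensors_nonneg {u : ℝ} (hu : 0 < u) : (PITensors u).Nonneg where
  A i j k := by simp only [PITensors]; positivity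
  B i j k := by simp only [PITensors]; positivity
  C i j k := by simp only [PITensors]; positivity
  D i := by simp only [PITensors]; positivity

theorem two_mul_div_pow_le {M ρ t X Y : ℝ} (n : ℕ) (hρ : 0 < ρ) (hY : 0 < Y) (hX : 0 ≤ X)
    (ht : M / ρ ^ (n + 1) ≤ t) : 2 * M * (X / (2 * ρ ^ (n + 1) * Y)) ≤ t * X / Y := by
  calc 2 * M * (X / (2 * ρ ^ (n + 1) * Y)) = M / ρ ^ (n + 1) * X / Y := by
        field_simp
    _ ≤ t * X / Y := by gcongr

section SpectralCurve

variable {𝔞 : Type*} [DecidableEq 𝔞] {θ : 𝔞 → ℤ → ℝ} {φ : 𝔞 × ℕ → 𝔞 × ℕ → ℝ}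

theorem genTensors_nonneg (hθ : ∀ a m, 0 ≤ θ a m) (hφ : ∀ α β, 0 ≤ φ α β) :
    (genTensors θ φ).Nonneg where
  A α β γ := by simp only [genTensors]; split_ifs <;> simp [hθ]
  B α β γ := by
    simp only [genTensors]
    apply_rules [add_nonneg, mul_nonneg, inv_nonneg.2, ite_nonneg, Nat.cast_nonneg, le_refl]
  C α β γ := by
    simp only [genTensors]
    apply_rules [add_nonneg, mul_nonneg, inv_nonneg.2, ite_nonneg, Nat.cast_nonneg, le_refl,
      Finset.sum_nonneg fun i _ => mul_nonneg (hθ _ _) (hφ _ _)]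
  D α := by
    simp only [genTensors]
    apply_rules [add_nonneg, mul_nonneg, div_nonneg, ite_nonneg, le_refl] <;> norm_num

variable {M ρ : ℝ}

theorem two_mul_PITensors_A_le (hρ : 0 < ρ) (hstrong : ∀ a (i : ℕ), M / ρ ^ (i + 1) ≤ θ a i)
    (a : 𝔞) (i j k : ℕ) :
    2 * M * (PITensors (ρ / 3)).A i j k ≤ (genTensors θ φ).A (a, i) (a, j) (a, k) := by
  simp only [PITensors, genTensors, true_and]
  split_ifs
  · convert hstrong a 0 using 1
    · field_simp
      ring
    · simp
  · simp

theorem two_mul_PITensors_B_le (hθ : ∀ a m, 0 ≤ θ a m) (hφ : ∀ α β, 0 ≤ φ α β) (hρ : 0 < ρ)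
    (hstrong : ∀ a (i : ℕ), M / ρ ^ (i + 1) ≤ θ a i) (a : 𝔞) (i j k : ℕ) :
    2 * M * (PITensors (ρ / 3)).B i j k ≤ (genTensors θ φ).B (a, i) (a, j) (a, k) := by
  simp only [PITensors, genTensors, show 3 * (ρ / 3) = ρ by ring, and_self, if_true]
  refine le_add_of_le_of_nonneg ?_ ?_
  · split_ifs with hijk
    · obtain ⟨n, hn⟩ := Nat.exists_eq_add_of_le hijk
      rw [show k + 2 - (i + j) = n + 1 by omega, show (k : ℤ) - i - j + 1 = n by omega,
        mul_assoc (2 * _)]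
      exact two_mul_div_pow_le n hρ (by positivity) (by positivity) (hstrong a n)
    · have := hθ a ((k : ℤ) - i - j + 1)
      rw [mul_zero]
      positivity
  apply_rules [mul_nonneg, ite_nonneg, Nat.cast_nonneg, le_refl]

theorem two_mul_PITensors_C_le (hθ : ∀ a m, 0 ≤ θ a m) (hφ : ∀ α β, 0 ≤ φ α β) (hρ : 0 < ρ)
    (hstrong : ∀ a (i : ℕ), M / ρ ^ (i + 1) ≤ θ a i) (a : 𝔞) (i j k : ℕ) :
    2 * M * (PITensors (ρ / 3)).C i j k ≤ (genTensors θ φ).C (a, i) (a, j) (a, k) := by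
  simp only [PITensors, genTensors, show 3 * (ρ / 3) = ρ by ring, and_self, if_true]
  refine le_add_of_le_of_nonneg (le_add_of_le_of_nonneg (le_add_of_le_of_nonneg ?_ ?_) ?_) ?_
  · split_ifs with hijk
    · obtain ⟨n, hn⟩ := Nat.exists_eq_add_of_le hijk
      rw [show j + k + 3 - i = n + 1 by omega, show (j : ℤ) + k - i + 2 = n by omega]
      exact two_mul_div_pow_le n hρ (by positivity) (by positivity) (hstrong a n)
    · have := hθ a ((j : ℤ) + k - i + 2)
      rw [mul_zero]
      positivity
  all_goals apply_rules [mul_nonneg, inv_nonneg.2, ite_nonneg, Nat.cast_nonneg, le_refl,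
    Finset.sum_nonneg fun i _ => mul_nonneg (hθ _ _) (hφ _ _)]

theorem two_mul_PITensors_D_le (hθ : ∀ a m, 0 ≤ θ a m) (hφ : ∀ α β, 0 ≤ φ α β) (hρ : 0 < ρ)
    (hstrong : ∀ a (i : ℕ), M / ρ ^ (i + 1) ≤ θ a i) (a : 𝔞) (i : ℕ) :
    2 * M * (PITensors (ρ / 3)).D i ≤ (genTensors θ φ).D (a, i) := by
  have hρ3 : 3 * (ρ / 3) = ρ := by ring
  have hφθ := mul_nonneg (hθ a 0) (hφ (a, 0) (a, 0))
  rcases i with _ | _ | i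
  · have key : 2 * M * (1 / (16 * ρ ^ 2)) = M / ρ ^ (1 + 1) / 8 := by
      field_simp
      ring
    have := hstrong a 1
    simp only [PITensors, genTensors, hρ3, zero_ne_one, ↓reduceIte, add_zero, key]
    push_cast at this
    linarith
  · have key : 2 * M * (1 / (48 * ρ)) = M / ρ ^ (0 + 1) / 24 := by
      field_simp
      ring
    have := hstrong a 0
    simp only [PITensors, genTensors, hρ3, one_ne_zero, ↓reduceIte, zero_add, key]
    push_cast at this
    linarith
  · simp [PITensors, genTensors]

theorem smul_PITensors_le_genTensors (hθ : ∀ a m, 0 ≤ θ a m) (hφ : ∀ α β, 0 ≤ φ α β)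
    (hρ : 0 < ρ) (hstrong : ∀ a (i : ℕ), M / ρ ^ (i + 1) ≤ θ a i) (a : 𝔞) :
    ((2 * M) • PITensors (ρ / 3)).Le ((genTensors θ φ).comap fun k => (a, k)) :=
  ⟨two_mul_PITensors_A_le (φ := φ) hρ hstrong a, two_mul_PITensors_B_le hθ hφ hρ hstrong a,
    two_mul_PITensors_C_le hθ hφ hρ hstrong a, two_mul_PITensors_D_le hθ hφ hρ hstrong a⟩

end SpectralCurve

theorem nonneg_of_lower_bound {𝔞 : Type*} {θ : 𝔞 → ℤ → ℝ}
    (hθneg : ∀ a m, m < 0 → θ a m = 0) {M ρ : ℝ} (hM : 0 ≤ M) (hρ : 0 ≤ ρ)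
    (hθ : ∀ a (i : ℕ), M / ρ ^ (i + 1) ≤ θ a i) (a : 𝔞) (m : ℤ) : 0 ≤ θ a m := by
  rcases lt_or_ge m 0 with hm | hm
  · rw [hθneg a m hm]
  · lift m to ℕ using hm
    exact (by positivity : 0 ≤ M / ρ ^ (m + 1)).trans (hθ a m)

theorem stmt_3_general {𝔞 : Type*} [Fintype 𝔞] [DecidableEq 𝔞]
    (θ : 𝔞 → ℤ → ℝ) (φ : 𝔞 × ℕ → 𝔞 × ℕ → ℝ)
    (hθneg : ∀ (a : 𝔞) (m : ℤ), m < 0 → θ a m = 0)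
    (hφpos : ∀ α β, 0 ≤ φ α β)
    (Mm ρm : ℝ) (hMm : 0 < Mm) (hρm : 0 < ρm)
    (hstrong : ∀ (a : 𝔞) (i : ℕ), Mm / ρm ^ (i + 1) ≤ θ a (i : ℤ))
    (F : ℕ → List (𝔞 × ℕ) → ℝ) (hF : IsAmplitudes Prod.snd (genTensors θ φ) F)
    (FPI : ℕ → List ℕ → ℝ) (hFPI : IsAmplitudes id (PITensors (ρm / 3)) FPI) :
    ∀ (g n : ℕ), 1 ≤ n → 2 < 2 * g + n → ∀ α : Fin n → 𝔞 × ℕ,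
      (if ∀ i j : Fin n, (α i).1 = (α j).1 then (1 : ℝ) else 0) * (2 * Mm) ^ (2 * g + n - 2) *
          FPI g (List.ofFn (fun i => (α i).2))
        ≤ F g (List.ofFn α) := by
  intro g n hn h2 α
  have hθ := nonneg_of_lower_bound hθneg hMm.le hρm.le hstrong
  have hT := genTensors_nonneg hθ hφpos
  split_ifs with hdiag
  · set a := (α ⟨0, hn⟩).1
    have hα : List.ofFn α = (List.ofFn fun i => (α i).2).map fun k => (a, k) := by
      rw [List.map_ofFn]
      exact congrArg List.ofFn (funext fun i => Prod.ext (hdiag i _) rfl)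
    have hpow : (2 * Mm) ^ (2 * g + n - 2) = (2 * Mm) ^ (2 * (g : ℤ) + n - 2) := by
      rw [← zpow_natCast]
      congr 1
      omega
    have hle := (hFPI.smul (by positivity)).le_map hF finite_setOf_snd_lt
      (fun _ _ h => (Prod.mk.inj h).2) ((PITensors_nonneg (by positivity)).smul (by positivity))
      hT (smul_PITensors_le_genTensors hθ hφpos hρm hstrong a) g (List.ofFn fun i => (α i).2)
      (by simpa)
    rw [one_mul, hα, hpow]
    simpa [rescaleAmp] using hle
  · simpa using hF.nonneg hT g _ (by simpa)

/-- lower bound of the amplitudes of a strongly positive regular spectral curve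
by the Painlevé I amplitudes at `u₋ = ρ₋/3`, with prefactor `Q₋ = 2 M₋`. -/
theorem stmt_3 {𝔞 : Type*} [Fintype 𝔞] [DecidableEq 𝔞] [Nonempty 𝔞]
    (θ : 𝔞 → ℤ → ℝ) (φ : 𝔞 × ℕ → 𝔞 × ℕ → ℝ)
    (hθneg : ∀ (a : 𝔞) (m : ℤ), m < 0 → θ a m = 0)
    (hθpos : ∀ (a : 𝔞) (m : ℕ), 0 ≤ θ a (m : ℤ))
    (hφpos : ∀ α β, 0 ≤ φ α β)
    (Mm ρm : ℝ) (hMm : 0 < Mm) (hρm : 0 < ρm)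
    (hstrong : ∀ (a : 𝔞) (i : ℕ), Mm / ρm ^ (i + 1) ≤ θ a (i : ℤ))
    (F : ℕ → List (𝔞 × ℕ) → ℝ) (hF : IsAmplitudes Prod.snd (genTensors θ φ) F)
    (FPI : ℕ → List ℕ → ℝ) (hFPI : IsAmplitudes id (PITensors (ρm / 3)) FPI) :
    ∀ (g n : ℕ), 1 ≤ n → 2 < 2 * g + n → ∀ α : Fin n → 𝔞 × ℕ,
      (if ∀ i j : Fin n, (α i).1 = (α j).1 then (1 : ℝ) else 0) * (2 * Mm) ^ (2 * g + n - 2) *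
          FPI g (List.ofFn (fun i => (α i).2))
        ≤ F g (List.ofFn α) :=
  stmt_3_general θ φ hθneg hφpos Mm ρm hMm hρm hstrong F hF FPI hFPI
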